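/- arXiv:2108.12741 — 2 statements merged into one kernel-verified Lean document; each statement's English description precedes it below -/
import Mathlib

section
/- Let 1/2 < C ≤ 1 and define the best-response map BR(x) = min(1, (1/C + 1 − x)/2) on (0,1]. Then the unique pair (p, q) ∈ (0,1]² with p = BR(q) and q = BR(p) is p = q = 1/(3C) + 1/3. -/
/-- Best-response map of the ARM-augmented game. -/
noncomputable def BR (C x : ℝ) : ℝ := min 1 ((1/C + 1 - x)/2)

/-- For `1/2 < C ≤ 1`, the unique mutual-best-response pair in `(0,1]²`
is `p = q = 1/(3C) + 1/3`. -/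
theorem unique_mutual_best_response (C : ℝ) (hC1 : 1/2 < C) (hC2 : C ≤ 1) :
    (1/(3*C) + 1/3) ∈ Set.Ioc (0:ℝ) 1 ∧
    BR C (1/(3*C) + 1/3) = 1/(3*C) + 1/3 ∧
    ∀ p ∈ Set.Ioc (0:ℝ) 1, ∀ q ∈ Set.Ioc (0:ℝ) 1,
      p = BR C q → q = BR C p → p = 1/(3*C) + 1/3 ∧ q = 1/(3*C) + 1/3 := by
  have hC0 : 0 < C := by linarith
  have hCne : C ≠ 0 := ne_of_gt hC0
  have hinv2 : 1/C < 2 := by rw [div_lt_iff₀ hC0]; linarith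
  have hinv1 : 1 ≤ 1/C := by rw [le_div_iff₀ hC0]; linarith
  have h3 : 1/(3*C) = (1/C)/3 := by field_simp
  set x := 1/(3*C) + 1/3 with hx
  have hxval : (1/C + 1 - x)/2 = x := by rw [hx, h3]; ring
  have hxlt : x < 1 := by rw [hx, h3]; linarith
  have hxpos : 0 < x := by rw [hx]; positivity
  refine ⟨⟨hxpos, le_of_lt hxlt⟩, ?_, ?_⟩
  · show min 1 ((1/C + 1 - x)/2) = x
    rw [hxval]; exact min_eq_right (le_of_lt hxlt)
  · intro p hp q hq hpq hqp
    by_cases ha : (1/C + 1 - q)/2 ≤ 1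
    · by_cases hb : (1/C + 1 - p)/2 ≤ 1
      · have hp' : p = (1/C + 1 - q)/2 := by
          rw [hpq]; exact min_eq_right ha
        have hq' : q = (1/C + 1 - p)/2 := by
          rw [hqp]; exact min_eq_right hb
        rw [hx, h3]
        constructor <;> linarith
      · push_neg at hb
        have hq' : q = 1 := by rw [hqp]; exact min_eq_left (le_of_lt hb)
        exfalso
        have hp' : p = (1/C + 1 - q)/2 := by rw [hpq]; exact min_eq_right ha
        rw [hq'] at hp'
        linarith
    · push_neg at ha
      have hp' : p = 1 := by rw [hpq]; exact min_eq_left (le_of_lt ha)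
      have hb : (1/C + 1 - p)/2 ≤ 1 := by rw [hp']; linarith
      have hq' : q = (1/C + 1 - p)/2 := by rw [hqp]; exact min_eq_right hb
      rw [hp'] at hq'
      exfalso; linarith
end

section
/- Let 1/2 < C ≤ 1 and define sequences by ḇ⁰ = 0, b̄⁰ = 1, ḇⁱ = (1/C + 1 − b̄^{i−1})/2 and b̄ⁱ = (1/C + 1 − ḇ^{i−1})/2 for i ≥ 1. Then both sequences (ḇⁱ) and (b̄ⁱ) converge to 1/(3C) + 1/3 as i → ∞. -/
/-!
Both endpoints are updated by the same map `g t = (1/C + 1 - t) / 2`, applied crosswise: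
`lb (i+1) = g (ub i)` and `ub (i+1) = g (lb i)`. Since `g` is a contraction with ratio `1/2`,
so is the crosswise map `(x, y) ↦ (g y, g x)` on `ℝ × ℝ` with the sup metric, and by Banach's fixed
point theorem its iterates converge to its unique fixed point `(L, L)`, where `L = (1/C + 1) / 3`
is the fixed point of `g`.
-/

open Filter Topology Function NNReal

variable {α : Type*}

def crossStep (g : α → α) (p : α × α) : α × α := (g p.2, g p.1)

lemma LipschitzWith.crossStep [PseudoEMetricSpace α] {K : ℝ≥0} {g : α → α}
    (hg : LipschitzWith K g) : LipschitzWith K (crossStep g) := by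
  have h := (hg.comp LipschitzWith.prod_snd).prodMk (hg.comp LipschitzWith.prod_fst)
  rwa [mul_one, max_self] at h

lemma ContractingWith.crossStep [EMetricSpace α] {K : ℝ≥0} {g : α → α}
    (hg : ContractingWith K g) : ContractingWith K (crossStep g) :=
  ⟨hg.1, hg.2.crossStep⟩

lemma IsFixedPt.crossStep {g : α → α} {x : α} (hx : IsFixedPt g x) :
    IsFixedPt (crossStep g) (x, x) := by
  simp [_root_.crossStep, IsFixedPt, hx.eq]

lemma crossStep_iterate {g : α → α} {u v : ℕ → α} (hu : ∀ i, u (i + 1) = g (v i))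
    (hv : ∀ i, v (i + 1) = g (u i)) (n : ℕ) : (crossStep g)^[n] (u 0, v 0) = (u n, v n) := by
  induction n with
  | zero => rfl
  | succ n ih => rw [iterate_succ_apply', ih, crossStep, hu, hv]

theorem ContractingWith.tendsto_of_cross_recurrence [MetricSpace α] [CompleteSpace α]
    {K : ℝ≥0} {g : α → α} (hg : ContractingWith K g) {x : α} (hx : IsFixedPt g x)
    {u v : ℕ → α} (hu : ∀ i, u (i + 1) = g (v i)) (hv : ∀ i, v (i + 1) = g (u i)) :
    Tendsto u atTop (𝓝 x) ∧ Tendsto v atTop (𝓝 x) := by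
  have : Nonempty α := ⟨x⟩
  have hcross := hg.crossStep
  have hlim : Tendsto (fun n ↦ (u n, v n)) atTop (𝓝 (x, x)) := by
    rw [hcross.fixedPoint_unique (IsFixedPt.crossStep hx)]
    simpa only [crossStep_iterate hu hv] using hcross.tendsto_iterate_fixedPoint (u 0, v 0)
  exact ⟨hlim.fst_nhds, hlim.snd_nhds⟩

lemma contractingWith_half_sub (a : ℝ) : ContractingWith (1 / 2) (fun t : ℝ ↦ (a - t) / 2) := by
  refine ⟨by norm_num, LipschitzWith.of_dist_le_mul fun x y ↦ ?_⟩
  have : (a - x) / 2 - (a - y) / 2 = (y - x) / 2 := by ring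
  rw [Real.dist_eq, Real.dist_eq, this, abs_div, abs_sub_comm, abs_two]
  norm_num [div_eq_inv_mul]

lemma isFixedPt_half_sub (a : ℝ) : IsFixedPt (fun t : ℝ ↦ (a - t) / 2) (a / 3) := by
  simp only [IsFixedPt]
  ring

theorem iterated_dominance_converges_general (C : ℝ) (hC1 : 1/2 < C)
    (lb ub : ℕ → ℝ)
    (hlb : ∀ i : ℕ, lb (i+1) = (1/C + 1 - ub i)/2)
    (hub : ∀ i : ℕ, ub (i+1) = (1/C + 1 - lb i)/2) :
    Filter.Tendsto lb Filter.atTop (nhds (1/(3*C) + 1/3)) ∧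
    Filter.Tendsto ub Filter.atTop (nhds (1/(3*C) + 1/3)) := by
  have hC : C ≠ 0 := (one_half_pos.trans hC1).ne'
  have hL : 1/(3*C) + 1/3 = (1/C + 1) / 3 := by field_simp
  rw [hL]
  exact (contractingWith_half_sub _).tendsto_of_cross_recurrence (isFixedPt_half_sub _) hlb hub

/-- The iterated-elimination interval endpoints both converge to `1/(3C) + 1/3`. -/
theorem iterated_dominance_converges (C : ℝ) (hC1 : 1/2 < C) (hC2 : C ≤ 1)
    (lb ub : ℕ → ℝ) (hlb0 : lb 0 = 0) (hub0 : ub 0 = 1)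
    (hlb : ∀ i : ℕ, lb (i+1) = (1/C + 1 - ub i)/2)
    (hub : ∀ i : ℕ, ub (i+1) = (1/C + 1 - lb i)/2) :
    Filter.Tendsto lb Filter.atTop (nhds (1/(3*C) + 1/3)) ∧
    Filter.Tendsto ub Filter.atTop (nhds (1/(3*C) + 1/3)) :=
  iterated_dominance_converges_general C hC1 lb ub hlb hub
end
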